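/- arXiv:1307.2689 — 2 statements merged into one kernel-verified Lean document; each statement's English description precedes it below -/
import Mathlib

section
/- Suppose in addition that R is a perfect field of characteristic 3. Then the endomorphism φ of St_{G₂}(R) determined by φ(S) = S′, φ(S′) = S, φ(X(t)) = X′(t³), φ(X′(t)) = X(t) for all t ∈ R is an automorphism (i.e. bijective). -/
/-! The exceptional diagram endomorphism of the Steinberg group of type `G₂` in
characteristic `3`. -/

namespace PaperAmalgams

open scoped commutatorElement

/-- Generators of the Steinberg group of type `G₂`: `S`, `S′` and the `X(t)`, `X′(t)`. -/
inductive G2Gen (R : Type*)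
  | S : G2Gen R
  | S' : G2Gen R
  | X : R → G2Gen R
  | X' : R → G2Gen R

/-- The defining relators of `St_{G₂}(R)` (in its simplified form, valid when `3 = 0` in
`R`); see the statement context for the list of relations. -/
def g2Rels (R : Type*) [CommRing R] : Set (FreeGroup (G2Gen R)) :=
  let S : FreeGroup (G2Gen R) := .of .S
  let S' : FreeGroup (G2Gen R) := .of .S'
  let X : R → FreeGroup (G2Gen R) := fun t => .of (.X t)
  let X' : R → FreeGroup (G2Gen R) := fun t => .of (.X' t)
  {S * S' * S * S' * S * S' * (S' * S * S' * S * S' * S)⁻¹,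
   S ^ 2 * S' * (S ^ 2)⁻¹ * S',
   S' ^ 2 * S * (S' ^ 2)⁻¹ * S,
   S * (X 1 * S * X 1 * S⁻¹ * X 1)⁻¹,
   S' * (X' 1 * S' * X' 1 * S'⁻¹ * X' 1)⁻¹} ∪
  (⋃ (t : R),
    {⁅S ^ 2, X t⁆,
     ⁅S' ^ 2, X' t⁆,
     S ^ 2 * X' t * (S ^ 2)⁻¹ * (X' (-t))⁻¹,
     S' ^ 2 * X t * (S' ^ 2)⁻¹ * (X (-t))⁻¹,
     ⁅S * S' * S * S' * S, X' t⁆,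
     ⁅S' * S * S' * S * S', X t⁆}) ∪
  (⋃ (t : R) (u : R),
    {X t * X u * (X (t + u))⁻¹,
     X' t * X' u * (X' (t + u))⁻¹,
     ⁅X' t, S' * S * X' u * S⁻¹ * S'⁻¹⁆,
     ⁅X t, S * S' * X u * S'⁻¹ * S⁻¹⁆,
     ⁅S * S' * X t * S'⁻¹ * S⁻¹, S' * S * X' u * S⁻¹ * S'⁻¹⁆,
     ⁅S * X' t * S⁻¹, S' * X u * S'⁻¹⁆,
     (X' t * (S * X' u * S⁻¹) * (X' t)⁻¹ * (S * X' u * S⁻¹)⁻¹) *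
       (S' * S * X' (t * u) * S⁻¹ * S'⁻¹)⁻¹,
     (X t * (S' * X u * S'⁻¹) * (X t)⁻¹ * (S' * X u * S'⁻¹)⁻¹) *
       (S * S' * X (t * u) * S'⁻¹ * S⁻¹)⁻¹,
     (X t * X' u * (X t)⁻¹ * (X' u)⁻¹) *
       ((S * S' * X (t ^ 2 * u) * S'⁻¹ * S⁻¹) *
        (S' * X (-(t * u)) * S'⁻¹) *
        (S * X' (t ^ 3 * u) * S⁻¹) *
        (S' * S * X' (-(t ^ 3 * u ^ 2)) * S⁻¹ * S'⁻¹))⁻¹})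

/-- The Steinberg group `St_{G₂}(R)` (presented form, for rings with `3 = 0`). -/
abbrev StG2 (R : Type*) [CommRing R] : Type _ := PresentedGroup (g2Rels R)

/-- The images of the generators in `St_{G₂}(R)`. -/
def StG2.gen {R : Type*} [CommRing R] (g : G2Gen R) : StG2 R := PresentedGroup.of g

end PaperAmalgams

/-! `φ ∘ φ` fixes `S`, `S′` and sends `X(t) ↦ X(t³)`, `X′(t) ↦ X′(t³)`: it is the automorphism of
`St_{G₂}(R)` induced by the Frobenius automorphism of the perfect field `R`. Since `φ ∘ φ` is
bijective, so is `φ`. -/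

namespace PaperAmalgams

variable {R S T : Type*} [CommRing R] [CommRing S] [CommRing T]

def G2Gen.map (f : R → S) : G2Gen R → G2Gen S
  | .S => .S
  | .S' => .S'
  | .X t => .X (f t)
  | .X' t => .X' (f t)

theorem map_mem_g2Rels (f : R →+* S) {r : FreeGroup (G2Gen R)} (hr : r ∈ g2Rels R) :
    FreeGroup.map (G2Gen.map f) r ∈ g2Rels S := by
  simp only [g2Rels, Set.mem_union, Set.mem_iUnion, Set.mem_insert_iff,
    Set.mem_singleton_iff] at hr ⊢
  obtain ((hr | ⟨t, hr⟩) | ⟨t, u, hr⟩) := hr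
  · left; left
    rcases hr with rfl | rfl | rfl | rfl | rfl <;> simp [G2Gen.map]
  · left; right; refine ⟨f t, ?_⟩
    rcases hr with rfl | rfl | rfl | rfl | rfl | rfl <;> simp [G2Gen.map]
  · right; refine ⟨f t, f u, ?_⟩
    rcases hr with rfl | rfl | rfl | rfl | rfl | rfl | rfl | rfl | rfl <;> simp [G2Gen.map]

namespace StG2

theorem lift_gen_map_eq_one (f : R →+* S) {r : FreeGroup (G2Gen R)} (hr : r ∈ g2Rels R) :
    FreeGroup.lift (fun g => gen (G2Gen.map f g)) r = 1 := by
  have hlift : FreeGroup.lift (fun g => gen (G2Gen.map f g)) =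
      (PresentedGroup.mk (g2Rels S)).comp (FreeGroup.map (G2Gen.map f)) :=
    FreeGroup.ext_hom _ _ fun _ => rfl
  rw [hlift, MonoidHom.comp_apply]
  exact PresentedGroup.one_of_mem (map_mem_g2Rels f hr)

def map (f : R →+* S) : StG2 R →* StG2 S :=
  PresentedGroup.toGroup fun _ => lift_gen_map_eq_one f

@[simp]
theorem map_gen (f : R →+* S) (g : G2Gen R) : map f (gen g) = gen (G2Gen.map f g) :=
  PresentedGroup.toGroup.of _

theorem map_comp (g : S →+* T) (f : R →+* S) : (map g).comp (map f) = map (g.comp f) :=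
  PresentedGroup.ext fun x => by
    cases x <;> exact (congrArg (map g) (map_gen f _)).trans (map_gen g _)

theorem map_id : map (RingHom.id R) = MonoidHom.id (StG2 R) :=
  PresentedGroup.ext fun x => by cases x <;> exact map_gen _ _

def congr (e : R ≃+* S) : StG2 R ≃* StG2 S :=
  MonoidHom.toMulEquiv (map e.toRingHom) (map e.symm.toRingHom)
    (by rw [map_comp, RingEquiv.symm_toRingHom_comp_toRingHom, map_id])
    (by rw [map_comp, RingEquiv.toRingHom_comp_symm_toRingHom, map_id])

@[simp]
theorem congr_gen (e : R ≃+* S) (g : G2Gen R) : congr e (gen g) = gen (G2Gen.map e g) :=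
  map_gen _ g

end StG2

end PaperAmalgams

open PaperAmalgams in
/-- If `R` is a perfect field of characteristic `3`, then the endomorphism of
`St_{G₂}(R)` determined by `S ↔ S′`, `X′(t) ↦ X(t) ↦ X′(t³)` is an automorphism. -/
theorem g2_diagram_endomorphism_bijective (R : Type*) [Field R] [CharP R 3]
    [PerfectField R] (φ : StG2 R →* StG2 R)
    (hS : φ (StG2.gen G2Gen.S) = StG2.gen G2Gen.S')
    (hS' : φ (StG2.gen G2Gen.S') = StG2.gen G2Gen.S)
    (hX : ∀ t : R, φ (StG2.gen (G2Gen.X t)) = StG2.gen (G2Gen.X' (t ^ 3)))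
    (hX' : ∀ t : R, φ (StG2.gen (G2Gen.X' t)) = StG2.gen (G2Gen.X t)) :
    Function.Bijective φ := by
  have hφφ : φ.comp φ = (StG2.congr (frobeniusEquiv R 3)).toMonoidHom :=
    PresentedGroup.ext fun g => by
      change φ (φ (StG2.gen g)) = StG2.congr (frobeniusEquiv R 3) (StG2.gen g)
      cases g <;> simp [hS, hS', hX, hX', G2Gen.map, frobenius_def]
  have hbij : Function.Bijective (φ ∘ φ) := by
    rw [← MonoidHom.coe_comp, hφφ, MulEquiv.coe_toMonoidHom]
    exact (StG2.congr _).bijective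
  exact ⟨hbij.1.of_comp, hbij.2.of_comp⟩
end

section
/- Suppose there exist finitely many units u₁, …, u_n ∈ Rˣ such that R is finitely generated as a module over the subring of R generated by {u₁, u₁⁻¹, …, u_n, u_n⁻¹}. Then the group St_{A₁}(R) is finitely generated. -/
/-! Finite generation of the Steinberg group of type `A₁`. -/

namespace PaperAmalgams

open scoped commutatorElement

/-- Generators: `S` and the `X(t)`, `t ∈ R`. -/
inductive A1Gen (R : Type*)
  | S : A1Gen R
  | X : R → A1Gen R

variable {R : Type*} [CommRing R]

/-- The word `s̃(r) = X(r) ⬝ S X(r⁻¹) S⁻¹ ⬝ X(r)` in the free group. -/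
def sTilde (r : Rˣ) : FreeGroup (A1Gen R) :=
  .of (.X (r : R)) * .of .S * .of (.X ((r⁻¹ : Rˣ) : R)) * (FreeGroup.of .S)⁻¹ *
    .of (.X (r : R))

/-- The word `h̃(r) = s̃(r) s̃(−1)` in the free group. -/
def hTilde (r : Rˣ) : FreeGroup (A1Gen R) := sTilde r * sTilde (-1)

/-- The defining relators of `St_{A₁}(R)`: for all `t, u ∈ R` and `r ∈ Rˣ`,
`X(t) X(u) = X(t+u)`; `S² ⇄ X(t)`; `S = X(1) S X(1) S⁻¹ X(1)`;
`h̃(r) X(t) h̃(r)⁻¹ = X(r² t)`; `h̃(r) ⬝ S X(t) S⁻¹ ⬝ h̃(r)⁻¹ = S X(r⁻² t) S⁻¹`. -/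
def a1Rels (R : Type*) [CommRing R] : Set (FreeGroup (A1Gen R)) :=
  let S : FreeGroup (A1Gen R) := .of .S
  let X : R → FreeGroup (A1Gen R) := fun t => .of (.X t)
  (⋃ (t : R) (u : R), {X t * X u * (X (t + u))⁻¹}) ∪
  (⋃ (t : R), {⁅S ^ 2, X t⁆}) ∪
  {S * (X 1 * S * X 1 * S⁻¹ * X 1)⁻¹} ∪
  (⋃ (r : Rˣ) (t : R),
    {hTilde r * X t * (hTilde r)⁻¹ * (X ((r : R) ^ 2 * t))⁻¹,
     hTilde r * (S * X t * S⁻¹) * (hTilde r)⁻¹ *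
       (S * X (((r⁻¹ : Rˣ) : R) ^ 2 * t) * S⁻¹)⁻¹})

/-- The Steinberg group `St_{A₁}(R)`. -/
abbrev StA1 (R : Type*) [CommRing R] : Type _ := PresentedGroup (a1Rels R)

end PaperAmalgams

/-! Let `U = s ∪ s⁻¹` and let `B` be the subring generated by the squares `u²`, `u ∈ U`. Each
`u ∈ U` is integral over `B`, so `R` is still a finite `B`-module; let `G` span it. Let `H` be
generated by `S`, `X(-1)`, the `X(u)` (`u ∈ U`) and the `X(g)` (`g ∈ G`). Then `H` contains every
`h̃(u)`, and conjugation by `h̃(u)` multiplies the argument of `X` by `u²`, so `{t | X t ∈ H}` is a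
`B`-submodule of `R` containing `G`, hence all of `R`. Since `S` and the `X(t)` generate, `H` is
the whole group. -/

theorem Module.Finite.of_closure_union_of_isIntegral {R : Type*} [CommRing R] {B : Subring R}
    {E : Set R} (hE : E.Finite) (hint : ∀ x ∈ E, IsIntegral B x)
    (hfin : Module.Finite (Subring.closure ((B : Set R) ∪ E)) R) : Module.Finite B R := by
  have : Module.Finite B (Algebra.adjoin B E) :=
    Algebra.finite_adjoin_of_finite_of_isIntegral hE hint
  have hadjoin : (Algebra.adjoin B E).toSubring = Subring.closure ((B : Set R) ∪ E) := by
    rw [Algebra.adjoin_eq_ring_closure]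
    congr
    exact Subtype.range_coe
  have : Module.Finite (Algebra.adjoin B E) R := by
    rw [← hadjoin] at hfin
    exact hfin
  exact Module.Finite.trans (Algebra.adjoin B E) R

theorem AddSubgroup.mul_mem_of_mem_closure {R : Type*} [CommRing R] {K : AddSubgroup R}
    {E : Set R} (hE : ∀ e ∈ E, ∀ t ∈ K, e * t ∈ K) {b : R} (hb : b ∈ Subring.closure E) :
    ∀ t ∈ K, b * t ∈ K := by
  induction hb using Subring.closure_induction with
  | mem e he => exact hE e he
  | zero => simp
  | one => simp
  | add x y _ _ hx hy => exact fun t ht => add_mul x y t ▸ add_mem (hx t ht) (hy t ht)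
  | neg x _ hx => exact fun t ht => neg_mul x t ▸ neg_mem (hx t ht)
  | mul x y _ _ hx hy => exact fun t ht => (mul_assoc x y t).symm ▸ hx _ (hy t ht)

theorem AddSubgroup.span_closure_le {R : Type*} [CommRing R] {K : AddSubgroup R}
    {E G : Set R} (hE : ∀ e ∈ E, ∀ t ∈ K, e * t ∈ K) (hG : G ⊆ K) :
    (Submodule.span (Subring.closure E) G).toAddSubgroup ≤ K := by
  intro x hx
  induction hx using Submodule.span_induction with
  | mem x hx => exact hG hx
  | zero => exact zero_mem K
  | add x y _ _ hx hy => exact add_mem hx hy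
  | smul b x _ hx => exact mul_mem_of_mem_closure hE b.2 x hx

namespace PaperAmalgams.StA1

variable {R : Type*} [CommRing R]

abbrev X (t : R) : StA1 R := PresentedGroup.of (A1Gen.X t)

abbrev S (R : Type*) [CommRing R] : StA1 R := PresentedGroup.of A1Gen.S

theorem X_add (t u : R) : X (t + u) = X t * X u := by
  refine (mul_inv_eq_one.mp (PresentedGroup.one_of_mem ?_)).symm
  exact Or.inl <| Or.inl <| Or.inl <| Set.mem_iUnion₂.mpr ⟨t, u, rfl⟩

theorem X_zero : X (0 : R) = 1 := by
  simpa using X_add (0 : R) 0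

theorem X_neg (t : R) : X (-t) = (X t)⁻¹ :=
  eq_inv_of_mul_eq_one_left (by rw [← X_add, neg_add_cancel, X_zero])

theorem hTilde_conj_X (r : Rˣ) (t : R) :
    PresentedGroup.mk (a1Rels R) (hTilde r) * X t * (PresentedGroup.mk (a1Rels R) (hTilde r))⁻¹ =
      X ((r : R) ^ 2 * t) := by
  have h := PresentedGroup.one_of_mem (show _ ∈ a1Rels R from
    Or.inr <| Set.mem_iUnion₂.mpr ⟨r, t, Or.inl rfl⟩)
  rw [map_mul, map_mul, map_mul, map_inv, map_inv, mul_inv_eq_one] at h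
  exact h

theorem mk_hTilde_mem {H : Subgroup (StA1 R)} {r : Rˣ} (hS : S R ∈ H) (hneg : X (-1 : R) ∈ H)
    (hr : X (r : R) ∈ H) (hr' : X ((r⁻¹ : Rˣ) : R) ∈ H) :
    PresentedGroup.mk (a1Rels R) (hTilde r) ∈ H := by
  have hs : ∀ u : Rˣ, X (u : R) ∈ H → X ((u⁻¹ : Rˣ) : R) ∈ H →
      PresentedGroup.mk (a1Rels R) (sTilde u) ∈ H := fun u hu hu' => by
    simp only [sTilde, map_mul, map_inv]
    exact mul_mem (mul_mem (mul_mem (mul_mem hu hS) hu') (inv_mem hS)) hu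
  exact map_mul (PresentedGroup.mk _) _ _ ▸
    mul_mem (hs r hr hr') (hs (-1) (by simpa using hneg) (by simpa using hneg))

def xLevel (H : Subgroup (StA1 R)) : AddSubgroup R where
  carrier := {t | X t ∈ H}
  zero_mem' := by simp [X_zero]
  add_mem' {a b} (ha : X a ∈ H) (hb : X b ∈ H) := by simpa [X_add] using mul_mem ha hb
  neg_mem' {a} (ha : X a ∈ H) := by simpa [X_neg] using inv_mem ha

@[simp]
theorem mem_xLevel {H : Subgroup (StA1 R)} {t : R} : t ∈ xLevel H ↔ X t ∈ H := Iff.rfl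

theorem unit_sq_mul_mem_xLevel {H : Subgroup (StA1 R)} {r : Rˣ} (hS : S R ∈ H)
    (hneg : X (-1 : R) ∈ H) (hr : X (r : R) ∈ H) (hr' : X ((r⁻¹ : Rˣ) : R) ∈ H) {t : R}
    (ht : t ∈ xLevel H) : (r : R) ^ 2 * t ∈ xLevel H := by
  have hh := mk_hTilde_mem hS hneg hr hr'
  rw [mem_xLevel, ← hTilde_conj_X]
  exact mul_mem (mul_mem hh ht) (inv_mem hh)

theorem eq_top_of_S_mem_of_X_mem {H : Subgroup (StA1 R)} (hS : S R ∈ H) (hX : ∀ t, X t ∈ H) :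
    H = ⊤ :=
  eq_top_iff.mpr fun g _ => PresentedGroup.generated_by _ H (fun | .S => hS | .X t => hX t) g

theorem closure_eq_top_of_span_sq_eq_top {U : Set Rˣ} (hU : ∀ u ∈ U, u⁻¹ ∈ U) {G : Set R}
    (hG : Submodule.span (Subring.closure ((fun u : Rˣ => (u : R) ^ 2) '' U)) G = ⊤) :
    Subgroup.closure (insert (S R) (X '' (insert (-1) ((↑) '' U ∪ G)))) = ⊤ := by
  set H := Subgroup.closure (insert (S R) (X '' (insert (-1) ((↑) '' U ∪ G))))
  have hX {t : R} (ht : t ∈ insert (-1) ((↑) '' U ∪ G)) : t ∈ xLevel H :=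
    Subgroup.subset_closure (Set.mem_insert_of_mem _ (Set.mem_image_of_mem X ht))
  have hS : S R ∈ H := Subgroup.subset_closure (Set.mem_insert _ _)
  have hneg := hX (Set.mem_insert _ _)
  have hU' {u : Rˣ} (hu : u ∈ U) : (u : R) ∈ xLevel H :=
    hX (Set.mem_insert_of_mem _ (Or.inl (Set.mem_image_of_mem _ hu)))
  have hsq : ∀ e ∈ (fun u : Rˣ => (u : R) ^ 2) '' U, ∀ t ∈ xLevel H, e * t ∈ xLevel H := by
    rintro _ ⟨u, hu, rfl⟩ t ht
    exact unit_sq_mul_mem_xLevel hS hneg (hU' hu) (hU' (hU u hu)) ht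
  have hall := AddSubgroup.span_closure_le hsq fun t ht =>
    hX (Set.mem_insert_of_mem _ (Or.inr ht))
  rw [hG, Submodule.top_toAddSubgroup, top_le_iff] at hall
  exact eq_top_of_S_mem_of_X_mem hS fun t => mem_xLevel.mp (hall ▸ AddSubgroup.mem_top t)

end PaperAmalgams.StA1

open PaperAmalgams in
/-- If `R` is finitely generated as a module over a subring generated by finitely many
units (and their inverses), then `St_{A₁}(R)` is finitely generated. -/
theorem stA1_fg_of_module_finite_over_units {R : Type*} [CommRing R]
    (s : Finset Rˣ)
    (hfin : Module.Finite
      (Subring.closure ((fun u : Rˣ => (u : R)) '' s ∪ (fun u : Rˣ => ((u⁻¹ : Rˣ) : R)) '' s))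
      R) :
    Group.FG (StA1 R) := by
  set U : Set Rˣ := ↑s ∪ (↑s)⁻¹
  have hU_fin : U.Finite := s.finite_toSet.union s.finite_toSet.inv
  have hU_inv : ∀ u ∈ U, u⁻¹ ∈ U := fun u hu => by simpa [U, or_comm] using hu
  set B := Subring.closure ((fun u : Rˣ => (u : R) ^ 2) '' U)
  have hA : (fun u : Rˣ => (u : R)) '' s ∪ (fun u : Rˣ => ((u⁻¹ : Rˣ) : R)) '' s = (↑) '' U := by
    rw [Set.image_union, ← Set.image_inv_eq_inv, Set.image_image]
  have hB : Subring.closure ((B : Set R) ∪ (↑) '' U) = Subring.closure ((↑) '' U) := by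
    rw [Subring.closure_union, Subring.closure_eq, sup_eq_right, Subring.closure_le]
    rintro _ ⟨u, hu, rfl⟩
    exact pow_mem (Subring.subset_closure (Set.mem_image_of_mem _ hu)) 2
  have hfinB : Module.Finite B R := by
    refine .of_closure_union_of_isIntegral (hU_fin.image _) ?_ (hB ▸ hA ▸ hfin)
    rintro _ ⟨u, hu, rfl⟩
    have hu2 : (u : R) ^ 2 ∈ B := Subring.subset_closure (Set.mem_image_of_mem _ hu)
    exact IsIntegral.of_pow two_pos (isIntegral_algebraMap (R := B) (x := ⟨_, hu2⟩))
  obtain ⟨G, hG⟩ := hfinB.fg_top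
  refine Group.fg_iff.mpr ⟨_, StA1.closure_eq_top_of_span_sq_eq_top hU_inv hG, ?_⟩
  exact (((hU_fin.image _).union G.finite_toSet).insert _ |>.image _).insert _
end
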